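/- For every valid dynamic linear contract π (possibly containing scalars α^k > 1) there exists a valid dynamic linear contract π′ = ((α′^k, τ′^k, a′^k))_{k=1}^{K′} with Util(π′) ≥ Util(π) and α′^k ≤ 1 for all k. (The principal never benefits from offering linear contracts with scalar exceeding 1, even dynamically.) -/

import Mathlib

open Finset

/-- Indifference point `α_{i,i+1}` between actions `i` and `i+1`. -/
noncomputable def indiff (c R : ℕ → ℝ) (i : ℕ) : ℝ :=
  (c (i + 1) - c i) / (R (i + 1) - R i)

/-- Breakpoint `α_{i,i+1}` with the convention `α_{0,1} := 0`. -/
noncomputable def bp (c R : ℕ → ℝ) (i : ℕ) : ℝ :=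
  if i = 0 then 0 else indiff c R i

/-- A linear contract instance with `n ≥ 2` actions indexed `1,…,n`:
costs `0 = c_1 < … < c_n`, rewards `0 ≤ R_1 < … < R_n`, and indifference
points satisfying `0 < α_{1,2} < … < α_{n-1,n} ≤ 1`. -/
def LinInstance (n : ℕ) (c R : ℕ → ℝ) : Prop :=
  2 ≤ n ∧ c 1 = 0 ∧ 0 ≤ R 1 ∧
    (∀ i, 1 ≤ i → i < n → c i < c (i + 1)) ∧
    (∀ i, 1 ≤ i → i < n → R i < R (i + 1)) ∧
    0 < indiff c R 1 ∧
    (∀ i, 1 ≤ i → i + 1 ≤ n - 1 → indiff c R i < indiff c R (i + 1)) ∧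
    indiff c R (n - 1) ≤ 1

/-- Best-response set of the agent to the linear contract with scalar `x`. -/
def BR (n : ℕ) (c R : ℕ → ℝ) (x : ℝ) : Set ℕ :=
  {i | i ∈ Finset.Icc 1 n ∧ ∀ j ∈ Finset.Icc 1 n, x * R j - c j ≤ x * R i - c i}

/-- A dynamic linear contract with `K` segments (indexed `1,…,K`):
scalars `α`, durations `τ`, and actions `a`. -/
structure DLC where
  K : ℕ
  α : ℕ → ℝ
  τ : ℕ → ℝ
  a : ℕ → ℕ

namespace DLC

/-- Total duration of the first `k` segments. -/
noncomputable def Tsum (π : DLC) (k : ℕ) : ℝ := ∑ j ∈ Finset.Icc 1 k, π.τ j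

/-- Cumulative scalar contract of the first `k` segments. -/
noncomputable def Asum (π : DLC) (k : ℕ) : ℝ := ∑ j ∈ Finset.Icc 1 k, π.α j * π.τ j

/-- Time-averaged contract `ᾱ^k` after the first `k` segments. -/
noncomputable def avg (π : DLC) (k : ℕ) : ℝ := π.Asum k / π.Tsum k

/-- Validity: positive durations, nonnegative scalars, actions in `{1,…,n}`,
and each action is a best response to the historical average contract at the
end of its segment, and (for `k ≥ 2`) also at its beginning. -/
def Valid (n : ℕ) (c R : ℕ → ℝ) (π : DLC) : Prop :=
  1 ≤ π.K ∧
    (∀ k ∈ Finset.Icc 1 π.K, 0 ≤ π.α k ∧ 0 < π.τ k ∧ π.a k ∈ Finset.Icc 1 n) ∧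
    (∀ k ∈ Finset.Icc 1 π.K, π.a k ∈ BR n c R (π.avg k)) ∧
    (∀ k, 2 ≤ k → k ≤ π.K → π.a k ∈ BR n c R (π.avg (k - 1)))

/-- Time-averaged principal utility. -/
noncomputable def Util (R : ℕ → ℝ) (π : DLC) : ℝ :=
  (∑ k ∈ Finset.Icc 1 π.K, π.τ k * (1 - π.α k) * R (π.a k)) / π.Tsum π.K

/-- Time-averaged agent utility. -/
noncomputable def UtilA (c R : ℕ → ℝ) (π : DLC) : ℝ :=
  (∑ k ∈ Finset.Icc 1 π.K, π.τ k * (π.α k * R (π.a k) - c (π.a k))) / π.Tsum π.K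

/-- Free-fall: the zero contract is offered on every segment after the first. -/
def FreeFall (π : DLC) : Prop := ∀ k, 2 ≤ k → k ≤ π.K → π.α k = 0

/-- Cumulative principal utility `u_P^{(t)}(π)` up to time `t`. -/
noncomputable def cumUtil (R : ℕ → ℝ) (π : DLC) (t : ℝ) : ℝ :=
  ∑ k ∈ Finset.Icc 1 π.K,
    (min t (π.Tsum k) - min t (π.Tsum (k - 1))) * (1 - π.α k) * R (π.a k)

/-- Cumulative scalar contract `A^{(t)}` up to time `t`. -/
noncomputable def cumA (π : DLC) (t : ℝ) : ℝ :=
  ∑ k ∈ Finset.Icc 1 π.K, (min t (π.Tsum k) - min t (π.Tsum (k - 1))) * π.α k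

end DLC

/-!
The optimum is attained by "climb-then-free-fall" contracts: offer `α_{a-1,a}` (the agent plays
`a`), then offer 0, so that the average scalar decays and the agent steps down through
`a-1, …, m` until the average reaches `α_{m-1,m}`. Their scalars are at most 1, and the best of
them, or the zero contract with value `R_1`, dominates every valid contract.

To see this, let `V` be the largest of these values and induct over the segments of a valid
contract, maintaining that the average utility so far, and that after every free fall from the
current state, is at most `V`. A segment with scalar `α` and duration `τ` raises the utility
after the free fall to `α_{m-1,m}`, times `α_{m-1,m}`, by `ατ` times the value of the
climb-then-free-fall contract from `a` to `m`, while the bound `V A` grows by `ατ V`. The agent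
can switch from `a` to `a ± 1` only when the average sits at the breakpoint between them, where
the free falls from `a` and from `a ± 1` coincide.
-/

namespace LinInstance

variable {n : ℕ} {c R : ℕ → ℝ}

theorem bp_strictMonoOn (hI : LinInstance n c R) : StrictMonoOn (bp c R) (Set.Iic (n - 1)) := by
  refine strictMonoOn_of_lt_add_one Set.ordConnected_Iic fun i _ _ hi => ?_
  obtain ⟨-, -, -, -, -, hpos, hlt, -⟩ := hI
  rcases i with _ | i
  · simpa [bp] using hpos
  · simpa [bp] using hlt (i + 1) (by omega) (Set.mem_Iic.1 hi)

theorem bp_lt (hI : LinInstance n c R) {i j : ℕ} (hij : i < j) (hj : j ≤ n - 1) :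
    bp c R i < bp c R j :=
  hI.bp_strictMonoOn (Set.mem_Iic.2 (by omega)) (Set.mem_Iic.2 hj) hij

theorem bp_le (hI : LinInstance n c R) {i j : ℕ} (hij : i ≤ j) (hj : j ≤ n - 1) :
    bp c R i ≤ bp c R j :=
  hI.bp_strictMonoOn.monotoneOn (Set.mem_Iic.2 (by omega)) (Set.mem_Iic.2 hj) hij

theorem bp_pos (hI : LinInstance n c R) {i : ℕ} (hi1 : 1 ≤ i) (hi : i ≤ n - 1) :
    0 < bp c R i := by
  simpa [bp] using hI.bp_lt hi1 hi

theorem bp_le_one (hI : LinInstance n c R) {i : ℕ} (hi : i ≤ n - 1) : bp c R i ≤ 1 := by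
  have hlast : bp c R (n - 1) = indiff c R (n - 1) := if_neg (by have := hI.1; omega)
  exact (hI.bp_le hi le_rfl).trans (hlast ▸ hI.2.2.2.2.2.2.2)

theorem R_monotoneOn (hI : LinInstance n c R) : MonotoneOn R (Set.Icc 1 n) :=
  monotoneOn_of_le_add_one Set.ordConnected_Icc fun i _ hi hi' =>
    (hI.2.2.2.2.1 i hi.1 (by have := hi'.2; omega)).le

theorem R_nonneg (hI : LinInstance n c R) {i : ℕ} (hi1 : 1 ≤ i) (hi : i ≤ n) : 0 ≤ R i :=
  hI.2.2.1.trans (hI.R_monotoneOn ⟨le_rfl, by omega⟩ ⟨hi1, hi⟩ hi1)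

theorem payoff_succ (hI : LinInstance n c R) {i : ℕ} (hi1 : 1 ≤ i) (hi : i < n) (x : ℝ) :
    x * R (i + 1) - c (i + 1) = x * R i - c i + (R (i + 1) - R i) * (x - bp c R i) := by
  have hR : R (i + 1) - R i ≠ 0 := sub_ne_zero.2 (hI.2.2.2.2.1 i hi1 hi).ne'
  rw [bp, if_neg (by omega), indiff]
  field_simp
  ring

theorem mem_BR {i : ℕ} {x : ℝ} (hI : LinInstance n c R) (hi1 : 1 ≤ i) (hi : i ≤ n)
    (hlow : bp c R (i - 1) ≤ x) (hup : i < n → x ≤ bp c R i) : i ∈ BR n c R x := by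
  set f : ℕ → ℝ := fun j => x * R j - c j
  have hmono : MonotoneOn f (Set.Icc 1 i) :=
    monotoneOn_of_le_add_one Set.ordConnected_Icc fun j _ ⟨hj1, _⟩ ⟨_, hji⟩ => by
      have hbj : bp c R j ≤ x := (hI.bp_le (by omega) (by omega)).trans hlow
      have hRj := hI.2.2.2.2.1 j hj1 (by omega)
      simp only [f, hI.payoff_succ hj1 (by omega)]
      nlinarith
  have hanti : AntitoneOn f (Set.Icc i n) :=
    antitoneOn_of_add_one_le Set.ordConnected_Icc fun j _ ⟨hij, _⟩ ⟨_, hjn⟩ => by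
      have hxj : x ≤ bp c R j := (hup (by omega)).trans (hI.bp_le hij (by omega))
      have hRj := hI.2.2.2.2.1 j (by omega) (by omega)
      simp only [f, hI.payoff_succ (by omega : 1 ≤ j) (by omega)]
      nlinarith
  refine ⟨mem_Icc.2 ⟨hi1, hi⟩, fun j hj => ?_⟩
  obtain ⟨hj1, hjn⟩ := mem_Icc.1 hj
  rcases le_total j i with hji | hij
  · exact hmono ⟨hj1, hji⟩ ⟨hi1, le_rfl⟩ hji
  · exact hanti ⟨le_rfl, hi⟩ ⟨hij, hjn⟩ hij

theorem le_bp_of_mem_BR {i : ℕ} {x : ℝ} (hI : LinInstance n c R) (h : i ∈ BR n c R x)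
    (hi : i < n) : x ≤ bp c R i := by
  obtain ⟨hi1, hbest⟩ := h
  have hi1 : 1 ≤ i := (mem_Icc.1 hi1).1
  have hstep := hbest (i + 1) (mem_Icc.2 ⟨by omega, hi⟩)
  have hR := hI.2.2.2.2.1 i hi1 hi
  rw [hI.payoff_succ hi1 hi] at hstep
  nlinarith

theorem bp_le_of_mem_BR {i : ℕ} {x : ℝ} (hI : LinInstance n c R) (h : i ∈ BR n c R x)
    (hi : 2 ≤ i) : bp c R (i - 1) ≤ x := by
  obtain ⟨hin, hbest⟩ := h
  have hin : i ≤ n := (mem_Icc.1 hin).2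
  have hstep := hbest (i - 1) (mem_Icc.2 ⟨by omega, by omega⟩)
  have hR := hI.2.2.2.2.1 (i - 1) (by omega) (by omega)
  have hpay := hI.payoff_succ (i := i - 1) (by omega) (by omega) x
  rw [Nat.sub_add_cancel (by omega : 1 ≤ i)] at hR hpay
  nlinarith

theorem eq_succ_of_mem_BR {i j : ℕ} {x : ℝ} (hI : LinInstance n c R) (hi : i ∈ BR n c R x)
    (hj : j ∈ BR n c R x) (hij : i < j) : j = i + 1 ∧ x = bp c R i := by
  have hjn : j ≤ n := (mem_Icc.1 hj.1).2
  have hup := hI.le_bp_of_mem_BR hi (by omega)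
  have hlow := hI.bp_le_of_mem_BR hj (by have := (mem_Icc.1 hi.1).1; omega)
  have hj' : j = i + 1 := by
    by_contra hne
    exact (hI.bp_lt (by omega : i < j - 1) (by omega)).not_ge (hlow.trans hup)
  subst hj'
  exact ⟨rfl, le_antisymm hup (by simpa using hlow)⟩

end LinInstance

section FreeFall

variable {n : ℕ} {c R : ℕ → ℝ}

noncomputable def fallCoeff (c R : ℕ → ℝ) (m a : ℕ) : ℝ :=
  R a * (bp c R (a - 1))⁻¹ + ∑ l ∈ Ico m a, R l * ((bp c R (l - 1))⁻¹ - (bp c R l)⁻¹)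

noncomputable def climbFallValue (c R : ℕ → ℝ) (m a : ℕ) : ℝ :=
  bp c R (m - 1) * (fallCoeff c R m a - R a)

theorem fallCoeff_self (m : ℕ) : fallCoeff c R m m = R m * (bp c R (m - 1))⁻¹ := by
  simp [fallCoeff]

theorem fallCoeff_succ {m a : ℕ} (hma : m ≤ a) :
    fallCoeff c R m (a + 1) = fallCoeff c R m a + (R (a + 1) - R a) * (bp c R a)⁻¹ := by
  rw [fallCoeff, fallCoeff, sum_Ico_succ_top hma, Nat.add_sub_cancel]
  ring

theorem fallCoeff_eq_succ_add {m a : ℕ} (hma : m < a) :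
    fallCoeff c R m a
      = fallCoeff c R (m + 1) a + R m * ((bp c R (m - 1))⁻¹ - (bp c R m)⁻¹) := by
  rw [fallCoeff, fallCoeff, sum_eq_sum_Ico_succ_bot hma]
  ring

theorem sub_add_fallCoeff_succ {a m : ℕ} {N T A : ℝ} (hb : bp c R a ≠ 0) (hA : A = bp c R a * T)
    (hma : m ≤ a) :
    N - T * R (a + 1) + A * fallCoeff c R m (a + 1) = N - T * R a + A * fallCoeff c R m a := by
  rw [fallCoeff_succ hma, hA]
  field_simp
  ring

/-- The state after time `T`, with accumulated scalar `A = ∑ α^j τ^j`, principal's utility `N` and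
current action `a`. Offering 0 from then on until the average `A / T'` has fallen to `α_{m-1,m}`
ends at `T' = A / α_{m-1,m}` with total utility `N - T R_a + A · fallCoeff m a`: the agent keeps
playing `a` until time `A / α_{a-1,a}`, then each `l = a-1, …, m` for a time
`A (α_{l-1,l}⁻¹ - α_{l,l+1}⁻¹)`. `ValueBound` says that the average utility is at most `V` now and
after each of these free falls. -/
def ValueBound (c R : ℕ → ℝ) (V : ℝ) (a : ℕ) (N T A : ℝ) : Prop :=
  N ≤ V * T ∧
    ∀ m, 2 ≤ m → m ≤ a → bp c R (m - 1) * (N - T * R a + A * fallCoeff c R m a) ≤ V * A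

namespace ValueBound

variable {V : ℝ} {a : ℕ} {N T A : ℝ}

theorem zero : ValueBound c R V a 0 0 0 := by
  simp [ValueBound]

theorem succ (hb : 0 < bp c R a) (hA : A = bp c R a * T) (h : ValueBound c R V a N T A) :
    ValueBound c R V (a + 1) N T A := by
  refine ⟨h.1, fun m hm2 hma => ?_⟩
  rcases Nat.lt_or_eq_of_le hma with hlt | rfl
  · rw [sub_add_fallCoeff_succ hb.ne' hA (by omega)]
    exact h.2 m hm2 (by omega)
  · have hfall : bp c R a * (N - T * R (a + 1) + A * fallCoeff c R (a + 1) (a + 1))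
        = bp c R a * N := by
      rw [fallCoeff_self, Nat.add_sub_cancel, hA]
      field_simp
      ring
    rw [Nat.add_sub_cancel, hfall, hA, mul_left_comm]
    exact mul_le_mul_of_nonneg_left h.1 hb.le

theorem of_succ (hb : bp c R a ≠ 0) (hA : A = bp c R a * T)
    (h : ValueBound c R V (a + 1) N T A) : ValueBound c R V a N T A :=
  ⟨h.1, fun m hm2 hma => sub_add_fallCoeff_succ hb hA hma ▸ h.2 m hm2 (by omega)⟩

theorem of_mem_BR {a' : ℕ} (hI : LinInstance n c R) (h : ValueBound c R V a N T A)
    (hT : 0 < T) (ha : a ∈ BR n c R (A / T)) (ha' : a' ∈ BR n c R (A / T)) :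
    ValueBound c R V a' N T A := by
  have hbp {i j : ℕ} (hi : i ∈ BR n c R (A / T)) (hij : i < j) (hj : j ∈ BR n c R (A / T)) :
      0 < bp c R i := hI.bp_pos (mem_Icc.1 hi.1).1 (by have := (mem_Icc.1 hj.1).2; omega)
  rcases lt_trichotomy a a' with hlt | rfl | hlt
  · obtain ⟨rfl, hx⟩ := hI.eq_succ_of_mem_BR ha ha' hlt
    exact h.succ (hbp ha hlt ha') (by rw [← hx]; field_simp)
  · exact h
  · obtain ⟨rfl, hx⟩ := hI.eq_succ_of_mem_BR ha' ha hlt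
    exact h.of_succ (hbp ha' hlt ha).ne' (by rw [← hx]; field_simp)

theorem segment {τ α : ℝ} (hI : LinInstance n c R) (hV1 : R 1 ≤ V)
    (hV : ∀ m, 2 ≤ m → m ≤ a → climbFallValue c R m a ≤ V) (hτ : 0 ≤ τ) (hα : 0 ≤ α)
    (hT : 0 < T + τ) (ha : a ∈ BR n c R ((A + α * τ) / (T + τ)))
    (h : ValueBound c R V a N T A) :
    ValueBound c R V a (N + τ * (1 - α) * R a) (T + τ) (A + α * τ) := by
  obtain ⟨ha1, han⟩ := mem_Icc.1 ha.1
  have hfall : ∀ m, 2 ≤ m → m ≤ a →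
      bp c R (m - 1) * (N + τ * (1 - α) * R a - (T + τ) * R a + (A + α * τ) * fallCoeff c R m a)
        ≤ V * (A + α * τ) := by
    intro m hm2 hma
    have hsplit :
        bp c R (m - 1) * (N + τ * (1 - α) * R a - (T + τ) * R a + (A + α * τ) * fallCoeff c R m a)
          = bp c R (m - 1) * (N - T * R a + A * fallCoeff c R m a)
            + α * τ * climbFallValue c R m a := by
      rw [climbFallValue]
      ring
    rw [hsplit]
    nlinarith [h.2 m hm2 hma, mul_le_mul_of_nonneg_left (hV m hm2 hma) (mul_nonneg hα hτ)]
  refine ⟨?_, hfall⟩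
  rcases le_or_gt (R a) V with hRV | hVR
  · nlinarith [h.1, mul_nonneg (mul_nonneg hα hτ) (hI.R_nonneg ha1 han),
      mul_le_mul_of_nonneg_left hRV hτ]
  · -- the free fall to `α_{a-1,a}` only appends time on `a`, whose reward exceeds `V`
    have ha2 : 2 ≤ a := by
      by_contra h1
      obtain rfl : a = 1 := by omega
      exact hVR.not_ge hV1
    have hb := hI.bp_pos (i := a - 1) (by omega) (by omega)
    have hlow : bp c R (a - 1) * (T + τ) ≤ A + α * τ :=
      (le_div_iff₀ hT).1 (hI.bp_le_of_mem_BR ha ha2)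
    have hlast := hfall a ha2 le_rfl
    rw [fallCoeff_self] at hlast
    have hmul : bp c R (a - 1) * (N + τ * (1 - α) * R a - (T + τ) * R a)
        ≤ bp c R (a - 1) * ((V - R a) * (T + τ)) := by
      have hcancel : bp c R (a - 1) * (A + α * τ) * (R a * (bp c R (a - 1))⁻¹)
          = (A + α * τ) * R a := by field_simp
      nlinarith [mul_le_mul_of_nonpos_left hlow (sub_nonpos.2 hVR.le)]
    nlinarith [le_of_mul_le_mul_left hmul hb]

end ValueBound

end FreeFall

namespace DLC

variable {n : ℕ} {c R : ℕ → ℝ} {π : DLC}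

noncomputable def utilSum (R : ℕ → ℝ) (π : DLC) (k : ℕ) : ℝ :=
  ∑ j ∈ Icc 1 k, π.τ j * (1 - π.α j) * R (π.a j)

@[simp] theorem Tsum_zero : π.Tsum 0 = 0 := by simp [Tsum]

@[simp] theorem Asum_zero : π.Asum 0 = 0 := by simp [Asum]

@[simp] theorem utilSum_zero : π.utilSum R 0 = 0 := by simp [utilSum]

theorem Tsum_succ (k : ℕ) : π.Tsum (k + 1) = π.Tsum k + π.τ (k + 1) :=
  sum_Icc_succ_top (by omega) _

theorem Asum_succ (k : ℕ) : π.Asum (k + 1) = π.Asum k + π.α (k + 1) * π.τ (k + 1) :=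
  sum_Icc_succ_top (by omega) _

theorem utilSum_succ (k : ℕ) :
    π.utilSum R (k + 1) = π.utilSum R k + π.τ (k + 1) * (1 - π.α (k + 1)) * R (π.a (k + 1)) :=
  sum_Icc_succ_top (by omega) _

theorem Valid.Tsum_pos (hπ : π.Valid n c R) {k : ℕ} (hk : 1 ≤ k) (hkK : k ≤ π.K) :
    0 < π.Tsum k :=
  sum_pos (fun j hj => (hπ.2.1 j (mem_Icc.2 ⟨(mem_Icc.1 hj).1, (mem_Icc.1 hj).2.trans hkK⟩)).2.1)
    ⟨1, mem_Icc.2 ⟨le_rfl, hk⟩⟩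

theorem Valid.valueBound {V : ℝ} (hI : LinInstance n c R) (hπ : π.Valid n c R)
    (hV1 : R 1 ≤ V) (hV : ∀ m a, 2 ≤ m → m ≤ a → a ≤ n → climbFallValue c R m a ≤ V) :
    ∀ k, 1 ≤ k → k ≤ π.K →
      ValueBound c R V (π.a k) (π.utilSum R k) (π.Tsum k) (π.Asum k) := by
  have ⟨_, hseg, hend, hstart⟩ := hπ
  have hstep : ∀ k < π.K,
      ValueBound c R V (π.a (k + 1)) (π.utilSum R k) (π.Tsum k) (π.Asum k) →
        ValueBound c R V (π.a (k + 1)) (π.utilSum R (k + 1)) (π.Tsum (k + 1)) (π.Asum (k + 1)) := by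
    intro k hk h
    have hk1 : k + 1 ∈ Icc 1 π.K := mem_Icc.2 ⟨by omega, hk⟩
    obtain ⟨hα, hτ, ha⟩ := hseg (k + 1) hk1
    have hT := hπ.Tsum_pos (k := k + 1) (by omega) hk
    rw [Tsum_succ] at hT
    rw [utilSum_succ, Tsum_succ, Asum_succ]
    refine h.segment hI hV1 (fun m hm2 hma => hV m _ hm2 hma (mem_Icc.1 ha).2) hτ.le hα hT ?_
    simpa only [avg, Tsum_succ, Asum_succ] using hend (k + 1) hk1
  intro k hk1
  induction k, hk1 using Nat.le_induction with
  | base =>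
    intro hK
    simpa using hstep 0 hK (by simpa using ValueBound.zero)
  | succ k hk ih =>
    intro hK
    refine hstep k hK ((ih (by omega)).of_mem_BR hI (hπ.Tsum_pos hk (by omega))
      (hend k (mem_Icc.2 ⟨hk, by omega⟩)) ?_)
    simpa [avg] using hstart (k + 1) (by omega) hK

theorem Valid.util_le {V : ℝ} (hI : LinInstance n c R) (hπ : π.Valid n c R)
    (hV1 : R 1 ≤ V) (hV : ∀ m a, 2 ≤ m → m ≤ a → a ≤ n → climbFallValue c R m a ≤ V) :
    π.Util R ≤ V :=
  (div_le_iff₀ (hπ.Tsum_pos hπ.1 le_rfl)).2 (hπ.valueBound hI hV1 hV π.K hπ.1 le_rfl).1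

end DLC

section Contracts

variable {n : ℕ} {c R : ℕ → ℝ}

def zeroContract : DLC := ⟨1, fun _ => 0, fun _ => 1, fun _ => 1⟩

theorem zeroContract_valid (hI : LinInstance n c R) : zeroContract.Valid n c R := by
  have hn : 2 ≤ n := hI.1
  have hBR : 1 ∈ BR n c R 0 := hI.mem_BR le_rfl (by omega) (by simp [bp]) fun _ =>
    (hI.bp_pos le_rfl (by omega)).le
  refine ⟨le_rfl, fun _ _ => ⟨le_rfl, one_pos, ?_⟩, fun _ _ => ?_,
    fun _ hk hkK => absurd (hk.trans hkK) (by decide)⟩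
  · exact show 1 ∈ Icc 1 n from mem_Icc.2 ⟨le_rfl, by omega⟩
  · simpa [zeroContract, DLC.avg, DLC.Asum] using hBR

theorem zeroContract_util : zeroContract.Util R = R 1 := by
  simp [zeroContract, DLC.Util, DLC.Tsum]

/-- Segment 1 makes `A = 1`, so the average after segment `k` is `α_{a-k,a-k+1}`. -/
noncomputable def climbFall (c R : ℕ → ℝ) (m a : ℕ) : DLC where
  K := a + 1 - m
  α k := if k = 1 then bp c R (a - 1) else 0
  τ k := if k = 1 then (bp c R (a - 1))⁻¹ else (bp c R (a - k))⁻¹ - (bp c R (a + 1 - k))⁻¹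
  a k := a + 1 - k

variable {m a : ℕ}

theorem climbFall_Tsum {k : ℕ} (hk : 1 ≤ k) :
    (climbFall c R m a).Tsum k = (bp c R (a - k))⁻¹ := by
  induction k, hk using Nat.le_induction with
  | base => simp [DLC.Tsum, climbFall]
  | succ k hk ih =>
    rw [DLC.Tsum_succ, ih]
    simp only [climbFall, show k + 1 ≠ 1 by omega, if_false, show a + 1 - (k + 1) = a - k by omega]
    ring

theorem climbFall_Asum (hb : bp c R (a - 1) ≠ 0) {k : ℕ} (hk : 1 ≤ k) :
    (climbFall c R m a).Asum k = 1 := by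
  induction k, hk using Nat.le_induction with
  | base => simp [DLC.Asum, climbFall, hb]
  | succ k hk ih =>
    rw [DLC.Asum_succ, ih]
    simp only [climbFall, show k + 1 ≠ 1 by omega, if_false, zero_mul, add_zero]

theorem climbFall_avg (hb : bp c R (a - 1) ≠ 0) {k : ℕ} (hk : 1 ≤ k) :
    (climbFall c R m a).avg k = bp c R (a - k) := by
  rw [DLC.avg, climbFall_Asum hb hk, climbFall_Tsum hk, one_div, inv_inv]

theorem climbFall_utilSum (hb : bp c R (a - 1) ≠ 0) {k : ℕ} (hk : 1 ≤ k) (hka : k ≤ a) :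
    (climbFall c R m a).utilSum R k = fallCoeff c R (a + 1 - k) a - R a := by
  induction k, hk using Nat.le_induction with
  | base =>
    simp only [DLC.utilSum, climbFall, Icc_self, sum_singleton, if_true, Nat.add_sub_cancel,
      fallCoeff_self]
    field_simp
  | succ k hk ih =>
    rw [DLC.utilSum_succ, ih (by omega), show a + 1 - (k + 1) = a - k by omega,
      fallCoeff_eq_succ_add (m := a - k) (by omega), show a - k + 1 = a + 1 - k by omega]
    simp only [climbFall, show k + 1 ≠ 1 by omega, if_false, show a + 1 - (k + 1) = a - k by omega,
      show a - k - 1 = a - (k + 1) by omega]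
    ring

theorem climbFall_util (hI : LinInstance n c R) (hm2 : 2 ≤ m) (hma : m ≤ a) (han : a ≤ n) :
    (climbFall c R m a).Util R = climbFallValue c R m a := by
  have hb := (hI.bp_pos (i := a - 1) (by omega) (by omega)).ne'
  have hK : (climbFall c R m a).K = a + 1 - m := rfl
  rw [DLC.Util, ← DLC.utilSum, hK, climbFall_utilSum hb (by omega) (by omega),
    climbFall_Tsum (by omega), show a + 1 - (a + 1 - m) = m by omega,
    show a - (a + 1 - m) = m - 1 by omega, div_inv_eq_mul, climbFallValue, mul_comm]

theorem climbFall_valid (hI : LinInstance n c R) (hm2 : 2 ≤ m) (hma : m ≤ a) (han : a ≤ n) :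
    (climbFall c R m a).Valid n c R := by
  have hb := hI.bp_pos (i := a - 1) (by omega) (by omega)
  have hK : (climbFall c R m a).K = a + 1 - m := rfl
  refine ⟨by omega, fun k hk => ?_, fun k hk => ?_, fun k hk2 hkK => ?_⟩
  · rw [hK, mem_Icc] at hk
    refine ⟨?_, ?_, show a + 1 - k ∈ Icc 1 n from mem_Icc.2 ⟨by omega, by omega⟩⟩
    · simp only [climbFall]
      split_ifs
      exacts [hb.le, le_rfl]
    · simp only [climbFall]
      split_ifs with hk1
      · exact inv_pos.2 hb
      · have hlow := hI.bp_pos (i := a - k) (by omega) (by omega)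
        have hlt : bp c R (a - k) < bp c R (a + 1 - k) := hI.bp_lt (by omega) (by omega)
        exact sub_pos.2 ((inv_lt_inv₀ (hlow.trans hlt) hlow).2 hlt)
  · rw [hK, mem_Icc] at hk
    rw [climbFall_avg hb.ne' hk.1]
    show a + 1 - k ∈ BR n c R _
    exact hI.mem_BR (by omega) (by omega) (le_of_eq (by congr 1; omega))
      fun _ => hI.bp_le (by omega) (by omega)
  · rw [hK] at hkK
    rw [climbFall_avg hb.ne' (by omega), show a - (k - 1) = a + 1 - k by omega]
    show a + 1 - k ∈ BR n c R _
    exact hI.mem_BR (by omega) (by omega) (hI.bp_le (by omega) (by omega)) fun _ => le_rfl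

theorem climbFall_α_le_one (hI : LinInstance n c R) (han : a ≤ n) :
    ∀ k ∈ Icc 1 (climbFall c R m a).K, (climbFall c R m a).α k ≤ 1 := by
  intro k _
  simp only [climbFall]
  split_ifs
  exacts [hI.bp_le_one (by omega), zero_le_one]

end Contracts

/-- The principal never benefits from offering linear
contracts with scalar exceeding 1: every valid dynamic linear contract is
dominated by a valid one all of whose scalars are at most 1. -/
theorem no_benefit_above_one (n : ℕ) (c R : ℕ → ℝ) (hInst : LinInstance n c R)
    (π : DLC) (hπ : π.Valid n c R) :
    ∃ π' : DLC, π'.Valid n c R ∧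
      (∀ k ∈ Finset.Icc 1 π'.K, π'.α k ≤ 1) ∧
      π'.Util R ≥ π.Util R := by
  set pairs := (Icc 2 n ×ˢ Icc 2 n).filter fun p : ℕ × ℕ => p.1 ≤ p.2
  obtain ⟨⟨m, a⟩, hmem, hbest⟩ := pairs.exists_max_image (fun p => climbFallValue c R p.1 p.2)
    ⟨(2, 2), by simp [pairs, hInst.1]⟩
  have hV : ∀ m' a', 2 ≤ m' → m' ≤ a' → a' ≤ n →
      climbFallValue c R m' a' ≤ climbFallValue c R m a :=
    fun m' a' hm' hma' ha'n => hbest (m', a') (by simp [pairs]; omega)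
  obtain ⟨⟨⟨hm2, -⟩, -, han⟩, hma⟩ : ((2 ≤ m ∧ m ≤ n) ∧ 2 ≤ a ∧ a ≤ n) ∧ m ≤ a := by
    simpa [pairs] using hmem
  rcases le_total (climbFallValue c R m a) (R 1) with hle | hle
  · refine ⟨zeroContract, zeroContract_valid hInst, fun _ _ => zero_le_one, ?_⟩
    rw [zeroContract_util]
    exact hπ.util_le hInst le_rfl fun m' a' hm' hma' ha'n => (hV m' a' hm' hma' ha'n).trans hle
  · refine ⟨climbFall c R m a, climbFall_valid hInst hm2 hma han,
      climbFall_α_le_one hInst han, ?_⟩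
    rw [climbFall_util hInst hm2 hma han]
    exact hπ.util_le hInst hle hV
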